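/- arXiv:2211.15604 — 3 statements merged into one kernel-verified Lean document; each statement's English description precedes it below -/
import Mathlib

section
/- Let f : ℂ³ → ℂ be a polynomial in three complex variables and let A, B, C be nonempty compact subsets of ℂ. Then max over (z_A, z_B, z_C) ∈ A × B × C of |f(z_A, z_B, z_C)| equals the max over (z_A, z_B, z_C) ∈ ∂A × ∂B × ∂C of |f(z_A, z_B, z_C)|. -/
open MvPolynomial

private lemma diff_eval (g : ℂ → Fin 3 → ℂ) (hg : ∀ i, Differentiable ℂ fun z => g z i)
    (f : MvPolynomial (Fin 3) ℂ) : Differentiable ℂ fun z => MvPolynomial.eval (g z) f := by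
  induction f using MvPolynomial.induction_on with
  | C a => simp only [MvPolynomial.eval_C]; exact differentiable_const a
  | add p q hp hq => simp only [map_add]; exact hp.add hq
  | mul_X p i hp => simp only [map_mul, MvPolynomial.eval_X]; exact hp.mul (hg i)

theorem stmt_4 (f : MvPolynomial (Fin 3) ℂ) (A B C : Set ℂ)
    (hA : A.Nonempty) (hB : B.Nonempty) (hC : C.Nonempty)
    (hAc : IsCompact A) (hBc : IsCompact B) (hCc : IsCompact C) :
    sSup {m : ℝ | ∃ a ∈ A, ∃ b ∈ B, ∃ c ∈ C,
        m = ‖MvPolynomial.eval ![a, b, c] f‖}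
      = sSup {m : ℝ | ∃ a ∈ frontier A, ∃ b ∈ frontier B, ∃ c ∈ frontier C,
        m = ‖MvPolynomial.eval ![a, b, c] f‖} := by
  have hfA : (frontier A).Nonempty := nonempty_frontier_iff.2 ⟨hA, hAc.ne_univ⟩
  have hfB : (frontier B).Nonempty := nonempty_frontier_iff.2 ⟨hB, hBc.ne_univ⟩
  have hfC : (frontier C).Nonempty := nonempty_frontier_iff.2 ⟨hC, hCc.ne_univ⟩
  have hfAs : frontier A ⊆ A := hAc.isClosed.frontier_subset
  have hfBs : frontier B ⊆ B := hBc.isClosed.frontier_subset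
  have hfCs : frontier C ⊆ C := hCc.isClosed.frontier_subset
  set φ : ℂ × ℂ × ℂ → ℝ := fun p => ‖MvPolynomial.eval ![p.1, p.2.1, p.2.2] f‖
    with hφ
  have hφc : Continuous φ := by
    apply continuous_norm.comp
    exact (MvPolynomial.continuous_eval f).comp
      (continuous_pi fun i => by fin_cases i <;> simp <;> fun_prop)
  have himg : ∀ S T U : Set ℂ,
      {m : ℝ | ∃ a ∈ S, ∃ b ∈ T, ∃ c ∈ U,
        m = ‖MvPolynomial.eval ![a, b, c] f‖} = φ '' (S ×ˢ T ×ˢ U) := by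
    intro S T U
    ext m
    constructor
    · rintro ⟨a, ha, b, hb, c, hc, rfl⟩
      exact ⟨(a, b, c), ⟨ha, hb, hc⟩, rfl⟩
    · rintro ⟨⟨a, b, c⟩, ⟨ha, hb, hc⟩, rfl⟩
      exact ⟨a, ha, b, hb, c, hc, rfl⟩
  rw [himg A B C, himg (frontier A) (frontier B) (frontier C)]
  have hbdd : BddAbove (φ '' (A ×ˢ B ×ˢ C)) :=
    ((hAc.prod (hBc.prod hCc)).image hφc).bddAbove
  have hbdd' : BddAbove (φ '' (frontier A ×ˢ frontier B ×ˢ frontier C)) :=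
    hbdd.mono (Set.image_mono (Set.prod_mono hfAs (Set.prod_mono hfBs hfCs)))
  have hne' : (φ '' (frontier A ×ˢ frontier B ×ˢ frontier C)).Nonempty :=
    (hfA.prod (hfB.prod hfC)).image φ
  apply le_antisymm
  · apply csSup_le ((hA.prod (hB.prod hC)).image φ)
    rintro m ⟨⟨a, b, c⟩, ⟨ha, hb, hc⟩, rfl⟩
    -- maximum modulus in the first variable
    have key : ∀ z ∈ frontier A, ∀ w ∈ frontier B, ∀ v ∈ frontier C,
        ‖MvPolynomial.eval ![z, w, v] f‖
          ≤ sSup (φ '' (frontier A ×ˢ frontier B ×ˢ frontier C)) := by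
      intro z hz w hw v hv
      exact le_csSup hbdd' ⟨(z, w, v), ⟨hz, hw, hv⟩, rfl⟩
    have step3 : ∀ z ∈ frontier A, ∀ w ∈ frontier B, ∀ v ∈ C,
        ‖MvPolynomial.eval ![z, w, v] f‖
          ≤ sSup (φ '' (frontier A ×ˢ frontier B ×ˢ frontier C)) := by
      intro z hz w hw v hv
      have hd : Differentiable ℂ fun t => MvPolynomial.eval ![z, w, t] f := by
        apply diff_eval
        intro i
        fin_cases i <;> simp [differentiable_const, differentiable_id]
      calc ‖MvPolynomial.eval ![z, w, v] f‖
          = ‖MvPolynomial.eval ![z, w, v] f‖ := rfl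
        _ ≤ _ := Complex.norm_le_of_forall_mem_frontier_norm_le hCc.isBounded
            hd.diffContOnCl (fun t ht => key z hz w hw t ht)
            (subset_closure hv)
    have step2 : ∀ z ∈ frontier A, ∀ w ∈ B,
        ‖MvPolynomial.eval ![z, w, c] f‖
          ≤ sSup (φ '' (frontier A ×ˢ frontier B ×ˢ frontier C)) := by
      intro z hz w hw
      have hd : Differentiable ℂ fun t => MvPolynomial.eval ![z, t, c] f := by
        apply diff_eval
        intro i
        fin_cases i <;> simp [differentiable_const, differentiable_id]
      exact Complex.norm_le_of_forall_mem_frontier_norm_le hBc.isBounded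
        hd.diffContOnCl (fun t ht => step3 z hz t ht c hc) (subset_closure hw)
    have hd : Differentiable ℂ fun t => MvPolynomial.eval ![t, b, c] f := by
      apply diff_eval
      intro i
      fin_cases i <;> simp [differentiable_const, differentiable_id]
    exact Complex.norm_le_of_forall_mem_frontier_norm_le hAc.isBounded
      hd.diffContOnCl (fun t ht => step2 t ht b hb) (subset_closure ha)
  · exact csSup_le_csSup hbdd hne'
      (Set.image_mono (Set.prod_mono hfAs (Set.prod_mono hfBs hfCs)))
end

section
/- Let α, λ, d > 0, C_f > 0, R_f ≥ 0, λ < 1/C_f, and let μ_g, L_g satisfy 0 ≤ μ_g < L_g ≤ ∞. For complex z_f with |z_f - C_f| = R_f and z_g with |z_g - C_g| = R_g (C_g, R_g defined via 1/(1+αμ_g), 1/(1+αL_g) as center/half-difference), and z_h real in [μ_h, L_h]-derived circle giving |2-λ-αz_h| ≤ d, one has |(1-λz_f)(1-λz_g) + λ(2-λ-αz_h)z_f z_g|² ≤ (|1-λz_f|² + λd r⁻¹|z_f|²)(|1-λz_g|² + λdr|z_g|²) for r = d/(1/C_f - λ). -/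
lemma aux_cs (a b x y k r : ℝ) (ha : 0 ≤ a) (hb : 0 ≤ b) (hx : 0 ≤ x) (hy : 0 ≤ y)
    (hk : 0 ≤ k) (hr : 0 < r) :
    (a * b + k * (x * y)) ^ 2 ≤ (a ^ 2 + k * r⁻¹ * x ^ 2) * (b ^ 2 + k * r * y ^ 2) := by
  have hinv : r * r⁻¹ = 1 := mul_inv_cancel₀ (ne_of_gt hr)
  have h2 : 0 ≤ (r * y * a - x * b) ^ 2 / r := by positivity
  have h3 : (r * y * a - x * b) ^ 2 / r
      = r * y ^ 2 * a ^ 2 + r⁻¹ * x ^ 2 * b ^ 2 - 2 * (a * b * (x * y)) := by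
    field_simp; ring
  have mid : 2 * (a * b * (x * y)) ≤ r * y ^ 2 * a ^ 2 + r⁻¹ * x ^ 2 * b ^ 2 := by
    rw [h3] at h2; linarith
  have expand : (a ^ 2 + k * r⁻¹ * x ^ 2) * (b ^ 2 + k * r * y ^ 2)
      = a ^ 2 * b ^ 2 + k * (r * y ^ 2 * a ^ 2 + r⁻¹ * x ^ 2 * b ^ 2)
        + k ^ 2 * (r * r⁻¹) * (x ^ 2 * y ^ 2) := by ring
  rw [expand, hinv]
  nlinarith [mul_le_mul_of_nonneg_left mid hk]

theorem stmt_12 (α lam d Cf Rf μg Lg Cg Rg r : ℝ)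
    (hα : 0 < α) (hlam : 0 < lam) (hd : 0 < d) (hCf : 0 < Cf) (hRf : 0 ≤ Rf)
    (hlC : lam < 1 / Cf) (hμg : 0 ≤ μg) (hμLg : μg < Lg)
    (hCg : Cg = (1 / (1 + α * μg) + 1 / (1 + α * Lg)) / 2)
    (hRg : Rg = (1 / (1 + α * μg) - 1 / (1 + α * Lg)) / 2)
    (hr : r = d / (1 / Cf - lam))
    (zf zg zh : ℂ)
    (hzf : ‖(zf - (Cf : ℂ))‖ = Rf)
    (hzg : ‖(zg - (Cg : ℂ))‖ = Rg)
    (hzh : ‖(2 - (lam : ℂ) - (α : ℂ) * zh)‖ ≤ d) :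
    ‖((1 - (lam : ℂ) * zf) * (1 - (lam : ℂ) * zg)
        + (lam : ℂ) * (2 - (lam : ℂ) - (α : ℂ) * zh) * zf * zg)‖ ^ 2
      ≤ (‖(1 - (lam : ℂ) * zf)‖ ^ 2 + lam * d * r⁻¹ * ‖zf‖ ^ 2)
        * (‖(1 - (lam : ℂ) * zg)‖ ^ 2 + lam * d * r * ‖zg‖ ^ 2) := by
  have hr0 : 0 < r := by
    rw [hr]; exact div_pos hd (by linarith)
  set A := (1 - (lam : ℂ) * zf)
  set B := (1 - (lam : ℂ) * zg)
  have h0 : 0 ≤ ‖zf‖ * ‖zg‖ := by positivity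
  have h1 : ‖(A * B + (lam : ℂ) * (2 - (lam : ℂ) - (α : ℂ) * zh) * zf * zg)‖
      ≤ ‖A‖ * ‖B‖ + lam * d * (‖zf‖ * ‖zg‖) := by
    calc ‖(A * B + (lam : ℂ) * (2 - (lam : ℂ) - (α : ℂ) * zh) * zf * zg)‖
        ≤ ‖(A * B)‖ + ‖((lam : ℂ) * (2 - (lam : ℂ) - (α : ℂ) * zh) * zf * zg)‖ :=
          norm_add_le _ _
      _ = ‖A‖ * ‖B‖
          + lam * ‖(2 - (lam : ℂ) - (α : ℂ) * zh)‖ * (‖zf‖ * ‖zg‖) := by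
          simp [norm_mul, Complex.norm_real, abs_of_pos hlam]; ring
      _ ≤ ‖A‖ * ‖B‖ + lam * d * (‖zf‖ * ‖zg‖) := by
          have := mul_le_mul_of_nonneg_right (mul_le_mul_of_nonneg_left hzh hlam.le) h0
          linarith
  have ha : 0 ≤ ‖(A * B + (lam : ℂ) * (2 - (lam : ℂ) - (α : ℂ) * zh) * zf * zg)‖ :=
    norm_nonneg _
  have key := aux_cs (‖A‖) (‖B‖) (‖zf‖) (‖zg‖)
    (lam * d) r (norm_nonneg _) (norm_nonneg _) (norm_nonneg _)
    (norm_nonneg _) (le_of_lt (mul_pos hlam hd)) hr0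
  exact le_trans (pow_le_pow_left₀ ha h1 2) key
end

section
/- Let 0 < μ_f < L_f < ∞ and α > 0. Then min{2μ_f/(1 + αμ_f)², 2L_f/(1 + αL_f)²} > 2μ_f/(α²L_f² + 2αμ_f + 1). -/
theorem stmt_15 (μf Lf α : ℝ) (hμ : 0 < μf) (hμL : μf < Lf) (hα : 0 < α) :
    min (2 * μf / (1 + α * μf) ^ 2) (2 * Lf / (1 + α * Lf) ^ 2)
      > 2 * μf / (α ^ 2 * Lf ^ 2 + 2 * α * μf + 1) := by
  have hL : 0 < Lf := hμ.trans hμL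
  have h1 : (0:ℝ) < (1 + α * μf) ^ 2 := by positivity
  have h2 : (0:ℝ) < (1 + α * Lf) ^ 2 := by positivity
  have h3 : (0:ℝ) < α ^ 2 * Lf ^ 2 + 2 * α * μf + 1 := by positivity
  rw [gt_iff_lt, lt_min_iff]
  constructor
  · rw [div_lt_div_iff₀ h3 h1]
    nlinarith [mul_pos (mul_pos hμ (mul_pos hα hα)) (mul_pos (by linarith : (0:ℝ) < Lf + μf) (sub_pos.mpr hμL))]
  · rw [div_lt_div_iff₀ h3 h2]
    nlinarith [sq_nonneg α, mul_pos (mul_pos hα hα) (mul_pos hL (sub_pos.mpr hμL))]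
end
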